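/- arXiv:1603.06087 — 3 statements merged into one kernel-verified Lean document; each statement's English description precedes it below -/
import Mathlib

section
/- Let p, q be integers with |p| ≥ 2 and |q| ≥ 2, let a ∈ ℝ, and set m = |p| and n = |q|. Then the self-affine set T(A, D) is a tile of ℝ²: there exists a discrete set J ⊆ ℝ² such that ⋃_{t ∈ J} (T + t) = ℝ² and (T° + t) ∩ (T° + s) = ∅ for all distinct s, t ∈ J, where T° denotes the interior of T. -/
open Matrix

/-- The expanding matrix with rows `(p, 0)` and `(a, q)`. -/
noncomputable def matB (p q : ℤ) (a : ℝ) : Matrix (Fin 2) (Fin 2) ℝ :=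
  !![(p : ℝ), 0; a, (q : ℝ)]

/-- The product digit set `{0,…,m-1} × {0,…,n-1}` viewed inside `ℝ²`. -/
def digitSet (m n : ℤ) : Set (Fin 2 → ℝ) :=
  {v | ∃ i j : ℤ, 0 ≤ i ∧ i ≤ m - 1 ∧ 0 ≤ j ∧ j ≤ n - 1 ∧ v = ![(i : ℝ), (j : ℝ)]}

/-- `T(A, D) = { ∑_{k≥1} A^{-k} d_k : d_k ∈ D }`. -/
noncomputable def selfAffineSet (A : Matrix (Fin 2) (Fin 2) ℝ) (D : Set (Fin 2 → ℝ)) :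
    Set (Fin 2 → ℝ) :=
  {x | ∃ d : ℕ → (Fin 2 → ℝ), (∀ k, d k ∈ D) ∧
    HasSum (fun k => (A⁻¹ ^ (k + 1)).mulVec (d k)) x}

/-- `T` is a tile of `ℝ²`: there is a discrete set `J` whose translates of `T` cover `ℝ²`
with pairwise disjoint interiors. -/
def IsTile (T : Set (Fin 2 → ℝ)) : Prop :=
  ∃ J : Set (Fin 2 → ℝ), DiscreteTopology J ∧
    (⋃ t ∈ J, (fun x => x + t) '' T) = Set.univ ∧
    ∀ s ∈ J, ∀ t ∈ J, s ≠ t →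
      ((fun x => x + s) '' interior T) ∩ ((fun x => x + t) '' interior T) = ∅

/-!
Since `A⁻¹` is lower triangular with diagonal `p⁻¹, q⁻¹`, a point of `T` has as first coordinate
a base-`p` expansion `∑ iₖ p^{-(k+1)}` with digits `0 ≤ iₖ < |p|`, and as second coordinate
`S(i) + ∑ jₖ q^{-(k+1)}`, where the shear `S(i)` depends only on the first digit sequence.
Expansions in base `b` with digits `0, …, |b| - 1` fill exactly an interval `[α_b, α_b + 1]`
(`α_b = Radix.leftEnd b`), so `T + ℤ²` covers the plane. If the interiors of `T + s` and `T + t`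
met, they would share a small open square. For `s₀ ≠ t₀` its first coordinates would lie in two
unit intervals shifted by a nonzero integer. For `s₀ = t₀`, choose inside it a first coordinate
`y` with a unique base-`p` expansion (a second expansion forces `p^N y - α_p ∈ ℤ` for some `N`,
so only countably many `y` fail); the fibre of `T` over `y` is then a unit segment, and again two
unit segments shifted by a nonzero integer cannot share an open interval.
-/

open Set Filter Topology

namespace Radix

variable {b : ℤ} {d d' : ℕ → ℤ} {x : ℝ}

theorem ne_zero_of_two_le_abs (hb : 2 ≤ |b|) : b ≠ 0 := by
  rintro rfl
  simp at hb

theorem abs_inv_lt_one (hb : 2 ≤ |b|) : |(b : ℝ)⁻¹| < 1 := by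
  have : (2 : ℝ) ≤ |(b : ℝ)| := by rw [← Int.cast_abs]; exact_mod_cast hb
  rw [abs_inv]
  exact inv_lt_one_of_one_lt₀ (by linarith)

def IsExpansion (b : ℤ) (d : ℕ → ℤ) (x : ℝ) : Prop :=
  (∀ k, 0 ≤ d k ∧ d k < |b|) ∧ HasSum (fun k => (d k : ℝ) * (b : ℝ)⁻¹ ^ (k + 1)) x

/-- The least number with a base-`b` expansion: all digits are `0` if `b > 0`, while for `b < 0`
the digit `|b| - 1` sits exactly at the odd powers of `b⁻¹`. -/
noncomputable def leftEnd (b : ℤ) : ℝ := if 0 < b then 0 else b / (1 - b)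

theorem mul_mem_Icc_leftEnd_iff (hb : b ≠ 0) :
    (b : ℝ) * x ∈ Icc (leftEnd b) (leftEnd b + |(b : ℝ)|) ↔
      x ∈ Icc (leftEnd b) (leftEnd b + 1) := by
  rcases hb.lt_or_gt with hneg | hpos
  · have hb' : (b : ℝ) < 0 := by exact_mod_cast hneg
    have hα : (b : ℝ) * (leftEnd b + 1) = leftEnd b := by
      rw [leftEnd, if_neg hneg.not_gt]
      field_simp [(by linarith : (0 : ℝ) < 1 - b).ne']
      ring
    simp only [mem_Icc, abs_of_neg hb']
    constructor <;> rintro ⟨h₁, h₂⟩ <;> constructor <;> nlinarith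
  · have hb' : (0 : ℝ) < b := by exact_mod_cast hpos
    simp only [leftEnd, if_pos hpos, mem_Icc, abs_of_pos hb', zero_add]
    constructor <;> rintro ⟨h₁, h₂⟩ <;> constructor <;> nlinarith

theorem inv_mul_add_mem_Icc (hb : b ≠ 0) (hx : x ∈ Icc (leftEnd b) (leftEnd b + 1)) {e : ℤ}
    (he : 0 ≤ e ∧ e < |b|) : (b : ℝ)⁻¹ * (x + e) ∈ Icc (leftEnd b) (leftEnd b + 1) := by
  have hb' : (b : ℝ) ≠ 0 := by exact_mod_cast hb
  have he₀ : (0 : ℝ) ≤ e := by exact_mod_cast he.1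
  have he₁ : (e : ℝ) + 1 ≤ |(b : ℝ)| := by rw [← Int.cast_abs]; exact_mod_cast he.2
  rw [← mul_mem_Icc_leftEnd_iff hb, mul_inv_cancel_left₀ hb']
  exact ⟨by linarith [hx.1], by linarith [hx.2]⟩

theorem IsExpansion.mem_Icc (hb : 2 ≤ |b|) (h : IsExpansion b d x) :
    x ∈ Icc (leftEnd b) (leftEnd b + 1) := by
  have hb0 := ne_zero_of_two_le_abs hb
  set r : ℝ := (b : ℝ)⁻¹
  have hpartial : ∀ N, ∀ t ∈ Icc (leftEnd b) (leftEnd b + 1),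
      ∑ k ∈ Finset.range N, (d k : ℝ) * r ^ (k + 1) + r ^ N * t ∈
        Icc (leftEnd b) (leftEnd b + 1) := by
    intro N
    induction N with
    | zero => simp
    | succ N ih =>
      intro t ht
      convert ih _ (inv_mul_add_mem_Icc hb0 ht (h.1 N)) using 1
      rw [Finset.sum_range_succ]
      ring
  have hlim : Tendsto (fun N => ∑ k ∈ Finset.range N, (d k : ℝ) * r ^ (k + 1)
      + r ^ N * leftEnd b) atTop (𝓝 x) := by
    convert h.2.tendsto_sum_nat.add
      ((tendsto_pow_atTop_nhds_zero_of_abs_lt_one (abs_inv_lt_one hb)).mul_const (leftEnd b))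
    simp
  exact isClosed_Icc.mem_of_tendsto hlim
    (Eventually.of_forall fun N => hpartial N _ ⟨le_rfl, by linarith⟩)

theorem summable_digits (hb : 2 ≤ |b|) (hd : ∀ k, 0 ≤ d k ∧ d k < |b|) :
    Summable fun k => (d k : ℝ) * (b : ℝ)⁻¹ ^ (k + 1) := by
  set r : ℝ := (b : ℝ)⁻¹
  refine .of_norm_bounded ((summable_geometric_of_lt_one (abs_nonneg r)
    (abs_inv_lt_one hb)).mul_left (|(b : ℝ)| * |r|)) fun k => ?_
  have hdk : |(d k : ℝ)| ≤ |(b : ℝ)| := by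
    rw [← Int.cast_abs, ← Int.cast_abs]
    exact_mod_cast (abs_of_nonneg (hd k).1).trans_le (hd k).2.le
  rw [Real.norm_eq_abs, abs_mul, abs_pow, pow_succ, mul_comm (|r| ^ k), ← mul_assoc]
  gcongr

noncomputable def digit (b : ℤ) (y : ℝ) : ℤ := min ⌊(b : ℝ) * y - leftEnd b⌋ (|b| - 1)

theorem digit_mem (hb : b ≠ 0) {y : ℝ} (hy : y ∈ Icc (leftEnd b) (leftEnd b + 1)) :
    (0 ≤ digit b y ∧ digit b y < |b|) ∧
      (b : ℝ) * y - digit b y ∈ Icc (leftEnd b) (leftEnd b + 1) := by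
  obtain ⟨h₀, h₁⟩ := (mul_mem_Icc_leftEnd_iff hb).2 hy
  have hb1 : 1 ≤ |b| := Int.one_le_abs hb
  have hfloor : 0 ≤ ⌊(b : ℝ) * y - leftEnd b⌋ := Int.floor_nonneg.2 (by linarith)
  refine ⟨⟨le_min hfloor (by omega), (min_le_right _ _).trans_lt (by omega)⟩, ?_⟩
  rcases le_total ⌊(b : ℝ) * y - leftEnd b⌋ (|b| - 1) with hle | hge
  · rw [digit, min_eq_left hle]
    constructor <;> linarith [Int.floor_le ((b : ℝ) * y - leftEnd b),
      Int.lt_floor_add_one ((b : ℝ) * y - leftEnd b)]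
  · rw [digit, min_eq_right hge]
    have hge' : ((|b| - 1 : ℤ) : ℝ) ≤ ⌊(b : ℝ) * y - leftEnd b⌋ := by exact_mod_cast hge
    have := Int.floor_le ((b : ℝ) * y - leftEnd b)
    push_cast [Int.cast_abs] at hge' ⊢
    constructor <;> linarith

theorem exists_isExpansion (hb : 2 ≤ |b|) (hx : x ∈ Icc (leftEnd b) (leftEnd b + 1)) :
    ∃ d, IsExpansion b d x := by
  have hb0 := ne_zero_of_two_le_abs hb
  set r : ℝ := (b : ℝ)⁻¹
  set f : ℝ → ℝ := fun y => b * y - digit b y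
  have horbit : ∀ n, f^[n] x ∈ Icc (leftEnd b) (leftEnd b + 1) := by
    intro n
    induction n with
    | zero => exact hx
    | succ n ih => rw [Function.iterate_succ_apply']; exact (digit_mem hb0 ih).2
  have hdigits : ∀ n, 0 ≤ digit b (f^[n] x) ∧ digit b (f^[n] x) < |b| :=
    fun n => (digit_mem hb0 (horbit n)).1
  have hpartial : ∀ N, ∑ k ∈ Finset.range N, (digit b (f^[k] x) : ℝ) * r ^ (k + 1)
      = x - r ^ N * f^[N] x := by
    intro N
    induction N with
    | zero => simp
    | succ N ih =>
      rw [Finset.sum_range_succ, ih, Function.iterate_succ_apply']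
      have : r * b = 1 := inv_mul_cancel₀ (by exact_mod_cast hb0)
      linear_combination (r ^ N * f^[N] x) * this
  have hr := (tendsto_pow_atTop_nhds_zero_of_abs_lt_one (abs_inv_lt_one hb)).abs.mul_const
    (|leftEnd b| + 1)
  rw [abs_zero, zero_mul] at hr
  have htail : Tendsto (fun N => r ^ N * f^[N] x) atTop (𝓝 0) := by
    refine squeeze_zero_norm (fun N => ?_) hr
    rw [Real.norm_eq_abs, abs_mul]
    have := horbit N
    gcongr
    exact abs_le.2 ⟨by linarith [this.1, neg_abs_le (leftEnd b)],
      by linarith [this.2, le_abs_self (leftEnd b)]⟩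
  have hlim := htail.const_sub x
  rw [sub_zero] at hlim
  exact ⟨_, hdigits, (summable_digits hb hdigits).hasSum_iff_tendsto_nat.2
    (hlim.congr fun N => (hpartial N).symm)⟩

theorem IsExpansion.tail (hb : b ≠ 0) (h : IsExpansion b d x) (N : ℕ) :
    IsExpansion b (fun k => d (k + N))
      ((b : ℝ) ^ N * (x - ∑ k ∈ Finset.range N, (d k : ℝ) * (b : ℝ)⁻¹ ^ (k + 1))) := by
  refine ⟨fun k => h.1 (k + N), ?_⟩
  have hN : (b : ℝ) ^ N * (b : ℝ)⁻¹ ^ N = 1 := by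
    rw [← mul_pow, mul_inv_cancel₀ (by exact_mod_cast hb), one_pow]
  have hterm : (fun k => (d (k + N) : ℝ) * (b : ℝ)⁻¹ ^ (k + 1)) =
      fun k => (b : ℝ) ^ N * ((d (k + N) : ℝ) * (b : ℝ)⁻¹ ^ (k + N + 1)) := by
    funext k
    rw [show k + N + 1 = k + 1 + N by ring, pow_add]
    linear_combination (-(d (k + N) : ℝ) * (b : ℝ)⁻¹ ^ (k + 1)) * hN
  rw [hterm]
  exact ((hasSum_nat_add_iff' N).2 h.2).mul_left _

theorem exists_int_pow_mul_sum_eq (hb : b ≠ 0) (d : ℕ → ℤ) (N : ℕ) :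
    ∃ z : ℤ, (b : ℝ) ^ N * ∑ k ∈ Finset.range N, (d k : ℝ) * (b : ℝ)⁻¹ ^ (k + 1) = z := by
  induction N with
  | zero => exact ⟨0, by simp⟩
  | succ N ih =>
    obtain ⟨z, hz⟩ := ih
    refine ⟨b * z + d N, ?_⟩
    have : (b : ℝ) ^ (N + 1) * (b : ℝ)⁻¹ ^ (N + 1) = 1 := by
      rw [← mul_pow, mul_inv_cancel₀ (by exact_mod_cast hb), one_pow]
    rw [Finset.sum_range_succ]
    push_cast
    linear_combination (b : ℝ) * hz + (d N : ℝ) * this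

def exceptionalSet (b : ℤ) : Set ℝ := range fun nz : ℕ × ℤ => (nz.2 + leftEnd b) / (b : ℝ) ^ nz.1

theorem countable_exceptionalSet (b : ℤ) : (exceptionalSet b).Countable := countable_range _

theorem IsExpansion.unique (hb : 2 ≤ |b|) (hx : x ∉ exceptionalSet b) (h : IsExpansion b d x)
    (h' : IsExpansion b d' x) : d = d' := by
  have hb0 := ne_zero_of_two_le_abs hb
  have hbR : (b : ℝ) ≠ 0 := by exact_mod_cast hb0
  have hbN : ∀ N, (b : ℝ) ^ N ≠ 0 := fun N => pow_ne_zero N hbR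
  by_contra hne
  obtain ⟨N, hN⟩ : ∃ N, ∑ k ∈ Finset.range N, (d k : ℝ) * (b : ℝ)⁻¹ ^ (k + 1) ≠
      ∑ k ∈ Finset.range N, (d' k : ℝ) * (b : ℝ)⁻¹ ^ (k + 1) := by
    by_contra! hall
    refine hne (funext fun k => ?_)
    have := hall (k + 1)
    rw [Finset.sum_range_succ, Finset.sum_range_succ, hall k, add_right_inj] at this
    exact_mod_cast mul_right_cancel₀ (pow_ne_zero _ (inv_ne_zero hbR)) this
  obtain ⟨z, hz⟩ := exists_int_pow_mul_sum_eq hb0 d N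
  obtain ⟨z', hz'⟩ := exists_int_pow_mul_sum_eq hb0 d' N
  have ht := (h.tail hb0 N).mem_Icc hb
  have ht' := (h'.tail hb0 N).mem_Icc hb
  rw [mul_sub, hz] at ht
  rw [mul_sub, hz'] at ht'
  have hzz : z ≠ z' := by
    rintro rfl
    exact hN (mul_left_cancel₀ (hbN N) (hz.trans hz'.symm))
  -- two digit tails that differ by a nonzero integer must sit at the two ends of the interval
  obtain ⟨m, hm⟩ : ∃ m : ℤ, (b : ℝ) ^ N * x = m + leftEnd b := by
    rcases hzz.lt_or_gt with hlt | hgt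
    · have : (z : ℝ) + 1 ≤ z' := by exact_mod_cast hlt
      exact ⟨z + 1, by push_cast; linarith [ht.2, ht'.1]⟩
    · have : (z' : ℝ) + 1 ≤ z := by exact_mod_cast hgt
      exact ⟨z, by linarith [ht.1, ht'.2]⟩
  exact hx ⟨(N, m), show ((m : ℝ) + leftEnd b) / _ = x by
    rw [← hm, mul_div_cancel_left₀ _ (hbN N)]⟩

end Radix

namespace Matrix

variable {M : Matrix (Fin 2) (Fin 2) ℝ}

theorem pow_apply_of_apply_zero_one_eq_zero (h : M 0 1 = 0) (k : ℕ) :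
    (M ^ k) 0 0 = M 0 0 ^ k ∧ (M ^ k) 0 1 = 0 ∧ (M ^ k) 1 1 = M 1 1 ^ k := by
  induction k with
  | zero => simp
  | succ k ih =>
    simp [pow_succ, mul_apply, Fin.sum_univ_two, ih.1, ih.2.1, ih.2.2, h]

theorem pow_succ_apply_one_zero (h : M 0 1 = 0) (k : ℕ) :
    (M ^ (k + 1)) 1 0 = (M ^ k) 1 0 * M 0 0 + M 1 1 ^ k * M 1 0 := by
  rw [pow_succ, mul_apply, Fin.sum_univ_two, (pow_apply_of_apply_zero_one_eq_zero h k).2.2]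

theorem summable_abs_pow_apply_one_zero (h : M 0 1 = 0) (h₀ : |M 0 0| < 1) (h₁ : |M 1 1| < 1) :
    Summable fun k => |(M ^ (k + 1)) 1 0| := by
  set ρ := max |M 0 0| |M 1 1|
  have hρ : ρ < 1 := max_lt h₀ h₁
  have hρ₀ : 0 ≤ ρ := (abs_nonneg _).trans (le_max_left _ _)
  have hbound : ∀ k : ℕ, |(M ^ (k + 1)) 1 0| ≤ |M 1 0| * (k ^ 1 * ρ ^ k + ρ ^ k) := by
    intro k
    induction k with
    | zero => simp
    | succ k ih =>
      rw [pow_succ_apply_one_zero h]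
      calc |(M ^ (k + 1)) 1 0 * M 0 0 + M 1 1 ^ (k + 1) * M 1 0|
          ≤ |(M ^ (k + 1)) 1 0| * ρ + ρ ^ (k + 1) * |M 1 0| := by
            refine (abs_add_le _ _).trans (add_le_add ?_ ?_) <;> rw [abs_mul]
            · exact mul_le_mul_of_nonneg_left (le_max_left _ _) (abs_nonneg _)
            · rw [abs_pow]; gcongr; exact le_max_right _ _
        _ ≤ |M 1 0| * (k ^ 1 * ρ ^ k + ρ ^ k) * ρ + ρ ^ (k + 1) * |M 1 0| := by gcongr
        _ = |M 1 0| * (((k + 1 : ℕ) : ℝ) ^ 1 * ρ ^ (k + 1) + ρ ^ (k + 1)) := by push_cast; ring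
  have hnorm : ‖ρ‖ < 1 := by rwa [Real.norm_eq_abs, abs_of_nonneg hρ₀]
  exact .of_nonneg_of_le (fun _ => abs_nonneg _) hbound
    (((summable_pow_mul_geometric_of_norm_lt_one 1 hnorm).add
      (summable_geometric_of_lt_one hρ₀ hρ)).mul_left _)

theorem mulVec_vecCons_of_apply_zero_one_eq_zero {N : Matrix (Fin 2) (Fin 2) ℝ} (h : N 0 1 = 0)
    (u v : ℝ) : N *ᵥ ![u, v] = ![N 0 0 * u, N 1 0 * u + N 1 1 * v] := by
  ext i
  fin_cases i <;> simp [mulVec, dotProduct, Fin.sum_univ_two, h]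

end Matrix

namespace SelfAffineTile

theorem exists_int_sub_mem_Icc (x c : ℝ) : ∃ k : ℤ, x - k ∈ Icc c (c + 1) :=
  ⟨⌊x - c⌋, by constructor <;> linarith [Int.floor_le (x - c), Int.lt_floor_add_one (x - c)]⟩

theorem eq_of_forall_abs_lt_sub_mem_Icc {c x ε s s' : ℝ} (hε : 0 < ε)
    (hs : ∃ z : ℤ, s' - s = z)
    (h : ∀ τ, |τ| < ε → x + τ - s ∈ Icc c (c + 1) ∧ x + τ - s' ∈ Icc c (c + 1)) : s = s' := by
  obtain ⟨z, hz⟩ := hs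
  obtain ⟨⟨-, h₁⟩, -, h₂⟩ := h (ε / 2) (by rw [abs_of_pos (half_pos hε)]; linarith)
  obtain ⟨⟨h₃, -⟩, h₄, -⟩ := h (-(ε / 2)) (by rw [abs_neg, abs_of_pos (half_pos hε)]; linarith)
  have hz₀ : z = 0 := by
    have : (z : ℝ) < 1 ∧ (-1 : ℝ) < z := ⟨by linarith, by linarith⟩
    have : z < 1 ∧ -1 < z := by exact_mod_cast this
    omega
  rw [hz₀, Int.cast_zero, sub_eq_zero] at hz
  exact hz.symm

theorem mem_span_basisFun_iff {ι : Type*} [Finite ι] {v : ι → ℝ} :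
    v ∈ Submodule.span ℤ (range (Pi.basisFun ℝ ι)) ↔ ∀ i, ∃ z : ℤ, (z : ℝ) = v i := by
  simp [Module.Basis.mem_span_iff_repr_mem]

theorem vecCons_mem_ball {w : Fin 2 → ℝ} {ε u v : ℝ} (hε : 0 < ε) (hu : |u - w 0| < ε)
    (hv : |v - w 1| < ε) : ![u, v] ∈ Metric.ball w ε := by
  rw [Metric.mem_ball, dist_pi_lt_iff hε, Fin.forall_fin_two]
  exact ⟨by simpa [Real.dist_eq] using hu, by simpa [Real.dist_eq] using hv⟩

theorem exists_ball_sub_mem_of_mem_add_interior {E : Type*} [SeminormedAddCommGroup E]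
    {T : Set E} {s t w : E}
    (hw : w ∈ ((fun x => x + s) '' interior T) ∩ ((fun x => x + t) '' interior T)) :
    ∃ ε > 0, ∀ u ∈ Metric.ball w ε, u - s ∈ T ∧ u - t ∈ T := by
  have hU : IsOpen {u | u - s ∈ interior T ∧ u - t ∈ interior T} :=
    (isOpen_interior.preimage (continuous_sub_right s)).inter
      (isOpen_interior.preimage (continuous_sub_right t))
  obtain ⟨⟨x, hx, rfl⟩, ⟨x', hx', hxx'⟩⟩ := hw
  obtain ⟨ε, hε, hsub⟩ := Metric.isOpen_iff.1 hU (x + s)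
    ⟨by simpa using hx, by simpa [← show x' + t = x + s from hxx'] using hx'⟩
  exact ⟨ε, hε, fun u hu => ⟨interior_subset (hsub hu).1, interior_subset (hsub hu).2⟩⟩

theorem matB_inv {p q : ℤ} (hp : p ≠ 0) (hq : q ≠ 0) (a : ℝ) :
    (matB p q a)⁻¹ = !![(p : ℝ)⁻¹, 0; -a / (p * q), (q : ℝ)⁻¹] := by
  rw [Matrix.inv_def, matB, adjugate_fin_two_of, det_fin_two_of, Ring.inverse_eq_inv']
  ext i j
  fin_cases i <;> fin_cases j <;> simp <;> field_simp

variable {p q : ℤ} {a : ℝ}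

noncomputable def shearSum (p q : ℤ) (a : ℝ) (i : ℕ → ℤ) : ℝ :=
  ∑' k, ((matB p q a)⁻¹ ^ (k + 1)) 1 0 * i k

theorem hasSum_shearSum (hp : 2 ≤ |p|) (hq : 2 ≤ |q|) {i : ℕ → ℤ}
    (hi : ∀ k, 0 ≤ i k ∧ i k < |p|) :
    HasSum (fun k => ((matB p q a)⁻¹ ^ (k + 1)) 1 0 * i k) (shearSum p q a i) := by
  have hp0 := Radix.ne_zero_of_two_le_abs hp
  have hq0 := Radix.ne_zero_of_two_le_abs hq
  refine Summable.hasSum (.of_norm_bounded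
    ((summable_abs_pow_apply_one_zero (M := (matB p q a)⁻¹) ?_ ?_ ?_).mul_right
    (|p| : ℝ)) fun k => ?_)
  · simp [matB_inv hp0 hq0]
  · simpa [matB_inv hp0 hq0] using Radix.abs_inv_lt_one hp
  · simpa [matB_inv hp0 hq0] using Radix.abs_inv_lt_one hq
  · have hik : |(i k : ℝ)| ≤ |(p : ℝ)| := by
      rw [← Int.cast_abs, ← Int.cast_abs, abs_of_nonneg (hi k).1]
      exact_mod_cast (hi k).2.le
    rw [Real.norm_eq_abs, abs_mul]
    exact mul_le_mul_of_nonneg_left hik (abs_nonneg _)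

theorem mem_selfAffineSet_iff (hp : 2 ≤ |p|) (hq : 2 ≤ |q|) {x : Fin 2 → ℝ} :
    x ∈ selfAffineSet (matB p q a) (digitSet |p| |q|) ↔
      ∃ i j, Radix.IsExpansion p i (x 0) ∧ Radix.IsExpansion q j (x 1 - shearSum p q a i) := by
  have hp0 := Radix.ne_zero_of_two_le_abs hp
  have hq0 := Radix.ne_zero_of_two_le_abs hq
  have hM : (matB p q a)⁻¹ 0 1 = 0 := by simp [matB_inv hp0 hq0]
  have hvec : ∀ k (u v : ℝ), ((matB p q a)⁻¹ ^ (k + 1)) *ᵥ ![u, v] = ![u * (p : ℝ)⁻¹ ^ (k + 1),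
      ((matB p q a)⁻¹ ^ (k + 1)) 1 0 * u + v * (q : ℝ)⁻¹ ^ (k + 1)] := by
    intro k u v
    obtain ⟨h₀₀, h₀₁, h₁₁⟩ := pow_apply_of_apply_zero_one_eq_zero hM (k + 1)
    rw [mulVec_vecCons_of_apply_zero_one_eq_zero h₀₁, h₀₀, h₁₁]
    simp [matB_inv hp0 hq0, mul_comm]
  have hD : ∀ v, v ∈ digitSet |p| |q| ↔
      ∃ i j : ℤ, (0 ≤ i ∧ i < |p|) ∧ (0 ≤ j ∧ j < |q|) ∧ v = ![(i : ℝ), (j : ℝ)] := by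
    intro v
    simp only [digitSet, mem_ofPred_eq, Int.lt_iff_add_one_le, ← le_sub_iff_add_le, and_assoc]
  constructor
  · rintro ⟨e, he, hsum⟩
    choose i j hi hj hij using fun k => (hD _).1 (he k)
    have h₀ := Pi.hasSum.1 hsum 0
    have h₁ := Pi.hasSum.1 hsum 1
    simp only [hij, hvec, cons_val_zero, cons_val_one] at h₀ h₁
    exact ⟨i, j, ⟨hi, h₀⟩, hj, by simpa using h₁.sub (hasSum_shearSum (a := a) hp hq hi)⟩
  · rintro ⟨i, j, ⟨hi, h₀⟩, hj, h₁⟩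
    refine ⟨fun k => ![(i k : ℝ), (j k : ℝ)], fun k => (hD _).2 ⟨_, _, hi k, hj k, rfl⟩, ?_⟩
    rw [Pi.hasSum, Fin.forall_fin_two]
    simp only [hvec, cons_val_zero, cons_val_one]
    exact ⟨h₀, by simpa using (hasSum_shearSum (a := a) hp hq hi).add h₁⟩

theorem apply_zero_mem_Icc (hp : 2 ≤ |p|) (hq : 2 ≤ |q|) {x : Fin 2 → ℝ}
    (hx : x ∈ selfAffineSet (matB p q a) (digitSet |p| |q|)) :
    x 0 ∈ Icc (Radix.leftEnd p) (Radix.leftEnd p + 1) :=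
  let ⟨_, _, hi, _⟩ := (mem_selfAffineSet_iff hp hq).1 hx
  hi.mem_Icc hp

theorem sub_shearSum_mem_Icc (hp : 2 ≤ |p|) (hq : 2 ≤ |q|) {y : ℝ}
    (hy : y ∉ Radix.exceptionalSet p) {i : ℕ → ℤ} (hi : Radix.IsExpansion p i y)
    {x : Fin 2 → ℝ} (hx : x ∈ selfAffineSet (matB p q a) (digitSet |p| |q|)) (hx₀ : x 0 = y) :
    x 1 - shearSum p q a i ∈ Icc (Radix.leftEnd q) (Radix.leftEnd q + 1) := by
  obtain ⟨i', j, hi', hj⟩ := (mem_selfAffineSet_iff hp hq).1 hx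
  rw [hx₀] at hi'
  obtain rfl := hi'.unique hp hy hi
  exact hj.mem_Icc hq

theorem iUnion_add_selfAffineSet_eq_univ (hp : 2 ≤ |p|) (hq : 2 ≤ |q|) :
    ⋃ t ∈ (Submodule.span ℤ (range (Pi.basisFun ℝ (Fin 2))) : Set (Fin 2 → ℝ)),
      (fun x => x + t) '' selfAffineSet (matB p q a) (digitSet |p| |q|) = univ := by
  refine eq_univ_of_forall fun x => mem_iUnion₂.2 ?_
  obtain ⟨k, hk⟩ := exists_int_sub_mem_Icc (x 0) (Radix.leftEnd p)
  obtain ⟨i, hi⟩ := Radix.exists_isExpansion hp hk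
  obtain ⟨l, hl⟩ := exists_int_sub_mem_Icc (x 1 - shearSum p q a i) (Radix.leftEnd q)
  obtain ⟨j, hj⟩ := Radix.exists_isExpansion hq hl
  refine ⟨![(k : ℝ), l], mem_span_basisFun_iff.2 (Fin.forall_fin_two.2 ⟨⟨k, rfl⟩, ⟨l, rfl⟩⟩),
    x - ![(k : ℝ), l], (mem_selfAffineSet_iff hp hq).2 ⟨i, j, by simpa using hi, ?_⟩,
    sub_add_cancel _ _⟩
  simpa [sub_right_comm] using hj

theorem add_interior_inter_add_interior_eq_empty (hp : 2 ≤ |p|) (hq : 2 ≤ |q|)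
    {s t : Fin 2 → ℝ} (hs : s ∈ Submodule.span ℤ (range (Pi.basisFun ℝ (Fin 2))))
    (ht : t ∈ Submodule.span ℤ (range (Pi.basisFun ℝ (Fin 2)))) (hst : s ≠ t) :
    ((fun x => x + s) '' interior (selfAffineSet (matB p q a) (digitSet |p| |q|))) ∩
      ((fun x => x + t) '' interior (selfAffineSet (matB p q a) (digitSet |p| |q|))) = ∅ := by
  set T := selfAffineSet (matB p q a) (digitSet |p| |q|)
  have hint : ∀ i, ∃ z : ℤ, t i - s i = z := fun i => by
    obtain ⟨z, hz⟩ := mem_span_basisFun_iff.1 hs i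
    obtain ⟨z', hz'⟩ := mem_span_basisFun_iff.1 ht i
    exact ⟨z' - z, by push_cast; rw [hz, hz']⟩
  refine eq_empty_of_forall_notMem fun w hw => hst ?_
  obtain ⟨ε, hε, hball⟩ := exists_ball_sub_mem_of_mem_add_interior hw
  have h₀ : s 0 = t 0 := by
    refine eq_of_forall_abs_lt_sub_mem_Icc (x := w 0) (c := Radix.leftEnd p) hε (hint 0)
      fun τ hτ => ?_
    obtain ⟨h, h'⟩ :=
      hball _ (vecCons_mem_ball (u := w 0 + τ) (v := w 1) hε (by simpa) (by simpa))
    exact ⟨by simpa using apply_zero_mem_Icc hp hq h, by simpa using apply_zero_mem_Icc hp hq h'⟩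
  -- over a first coordinate with a unique expansion, `T` is a vertical segment of length one
  have h₁ : s 1 = t 1 := by
    obtain ⟨y, hy, hyw⟩ :=
      ((Radix.countable_exceptionalSet p).dense_compl ℝ).exists_dist_lt (w 0 - s 0) hε
    have hmem : ∀ τ, |τ| < ε → ![y + s 0, w 1 + τ] ∈ Metric.ball w ε := fun τ hτ =>
      vecCons_mem_ball hε (by rwa [Real.dist_eq, abs_sub_comm, sub_sub_eq_add_sub] at hyw)
        (by simpa using hτ)
    obtain ⟨i, -, hi, -⟩ := (mem_selfAffineSet_iff hp hq).1 (hball _ (hmem 0 (by simpa))).1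
    simp only [Pi.sub_apply, cons_val_zero, add_sub_cancel_right] at hi
    refine eq_of_forall_abs_lt_sub_mem_Icc (x := w 1 - shearSum p q a i) (c := Radix.leftEnd q)
      hε (hint 1) fun τ hτ => ?_
    obtain ⟨h, h'⟩ := hball _ (hmem τ hτ)
    constructor
    · convert sub_shearSum_mem_Icc hp hq hy hi h (by simp) using 1
      simp only [Pi.sub_apply, cons_val_one, cons_val_zero]
      ring
    · convert sub_shearSum_mem_Icc hp hq hy hi h' (by simp [h₀]) using 1
      simp only [Pi.sub_apply, cons_val_one, cons_val_zero]
      ring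
  exact funext (Fin.forall_fin_two.2 ⟨h₀, h₁⟩)

end SelfAffineTile

open SelfAffineTile in
theorem stmt_15 (p q : ℤ) (a : ℝ) (hp : 2 ≤ |p|) (hq : 2 ≤ |q|) :
    IsTile (selfAffineSet (matB p q a) (digitSet |p| |q|)) :=
  ⟨_, ZSpan.discreteTopology_pi_basisFun, iUnion_add_selfAffineSet_eq_univ hp hq,
    fun _ hs _ ht hst => add_interior_inter_add_interior_eq_empty hp hq hs ht hst⟩
end

section
/- Let p, q, m, n be integers with |p| ≥ 2, |q| ≥ 2, m, n ≥ 1, mn = |pq|, and m > |p|, and let a = 0. Then the self-affine set T(A, D) is not a tile of ℝ²: there is no discrete set J ⊆ ℝ² such that ⋃_{t ∈ J} (T + t) = ℝ² and (T° + t) ∩ (T° + s) = ∅ for all distinct s, t ∈ J, where T° denotes the interior of T. -/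
open Matrix

/-!
For `a = 0` the matrix is `diag(p, q)`, so the second coordinate of every point of `T` is a
base-`q` expansion `∑ q^{-(k+1)} c_k` with digits `c_k ∈ {0, …, n-1}`. Since `mn = |pq|` and
`m > |p|`, there are only `n < |q|` digits. The set `Y` of such expansions is bounded and satisfies
`Y ⊆ ⋃_{d} q⁻¹ (d + Y)`, so `vol Y ≤ (n / |q|) vol Y`, forcing `vol Y = 0`. Hence `T ⊆ ℝ × Y` is
Lebesgue-null, and countably many translates of a null set (a discrete subset of `ℝ²` is
countable) cannot cover the plane.
-/

open MeasureTheory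
open scoped Pointwise

def digitExpansions (b : ℝ) (D : Finset ℝ) : Set ℝ :=
  {y | ∃ c : ℕ → ℝ, (∀ k, c k ∈ D) ∧ HasSum (fun k => b⁻¹ ^ (k + 1) * c k) y}

namespace digitExpansions

variable {b : ℝ} {D : Finset ℝ}

theorem subset_iUnion_smul_vadd (hb : b ≠ 0) :
    digitExpansions b D ⊆ ⋃ d ∈ D, b⁻¹ • (d +ᵥ digitExpansions b D) := by
  rintro y ⟨c, hc, hy⟩
  have htail : HasSum (fun k => b⁻¹ ^ (k + 1) * c (k + 1)) (b * y - c 0) := by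
    have := ((hasSum_nat_add_iff' 1).mpr hy).mul_left b
    rw [Finset.sum_range_one, mul_sub, ← mul_assoc, zero_add, pow_one, mul_inv_cancel₀ hb,
      one_mul] at this
    simpa only [pow_succ' _ (_ + 1), ← mul_assoc, mul_inv_cancel₀ hb, one_mul] using this
  refine Set.mem_iUnion₂.2 ⟨c 0, hc 0, Set.mem_smul_set.2 ⟨b * y, ?_, by simp [hb]⟩⟩
  exact Set.mem_vadd_set.2 ⟨b * y - c 0, ⟨fun k => c (k + 1), fun k => hc _, htail⟩, by simp⟩

theorem isBounded (hb : 1 < |b|) : Bornology.IsBounded (digitExpansions b D) := by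
  obtain ⟨M, hM⟩ := isBounded_iff_forall_norm_le.1 D.finite_toSet.isBounded
  have hr0 : 0 ≤ |b|⁻¹ := by positivity
  have hr1 : |b|⁻¹ < 1 := inv_lt_one_of_one_lt₀ hb
  have hg : Summable fun k : ℕ => |b|⁻¹ ^ k * (|b|⁻¹ * M) :=
    (summable_geometric_of_lt_one hr0 hr1).mul_right _
  refine isBounded_iff_forall_norm_le.2 ⟨∑' k, |b|⁻¹ ^ k * (|b|⁻¹ * M), ?_⟩
  rintro y ⟨c, hc, hy⟩
  refine hy.norm_le_of_bounded hg.hasSum fun k => ?_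
  rw [norm_mul, norm_pow, norm_inv, Real.norm_eq_abs, pow_succ, mul_assoc]
  gcongr
  exact hM _ (hc k)

theorem volume_eq_zero (hb : 1 < |b|) (hD : (D.card : ℝ) < |b|) :
    volume (digitExpansions b D) = 0 := by
  set Y := digitExpansions b D
  have hb0 : b ≠ 0 := by rintro rfl; norm_num at hb
  have hself : volume Y ≤ D.card * ENNReal.ofReal |b|⁻¹ * volume Y :=
    calc volume Y ≤ volume (⋃ d ∈ D, b⁻¹ • (d +ᵥ Y)) := measure_mono (subset_iUnion_smul_vadd hb0)
      _ ≤ ∑ d ∈ D, volume (b⁻¹ • (d +ᵥ Y)) := measure_biUnion_finset_le _ _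
      _ = D.card * ENNReal.ofReal |b|⁻¹ * volume Y := by
        simp [Measure.addHaar_smul, measure_vadd, mul_assoc]
  have hlt : (D.card : ENNReal) * ENNReal.ofReal |b|⁻¹ < 1 := by
    rw [← ENNReal.ofReal_natCast, ← ENNReal.ofReal_mul (by positivity), ENNReal.ofReal_lt_one]
    rwa [← div_eq_mul_inv, div_lt_one (by linarith)]
  have hfin : volume Y ≠ ⊤ := (isBounded hb).measure_lt_top.ne
  by_contra hY
  exact (((ENNReal.mul_lt_mul_iff_left hY hfin).2 hlt).trans_eq (one_mul _)).not_ge hself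

end digitExpansions

theorem inv_matB_zero {p q : ℤ} (hp : p ≠ 0) (hq : q ≠ 0) :
    (matB p q 0)⁻¹ = diagonal ![(p : ℝ)⁻¹, (q : ℝ)⁻¹] := by
  apply inv_eq_right_inv
  ext i j
  fin_cases i <;> fin_cases j <;> simp [matB, hp, hq]

theorem apply_one_mem_digitExpansions_of_mem_selfAffineSet {p q m n : ℤ} (hp : p ≠ 0)
    (hq : q ≠ 0) {x : Fin 2 → ℝ} (hx : x ∈ selfAffineSet (matB p q 0) (digitSet m n)) :
    x 1 ∈ digitExpansions q ((Finset.Ico 0 n).image Int.cast) := by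
  obtain ⟨d, hd, hsum⟩ := hx
  choose i j _ _ hj0 hj1 hdij using hd
  refine ⟨fun k => j k, fun k => Finset.mem_image_of_mem _
    (Finset.mem_Ico.2 ⟨hj0 k, Int.lt_of_le_sub_one (hj1 k)⟩), ?_⟩
  simpa [inv_matB_zero hp hq, diagonal_pow, mulVec_diagonal, hdij] using Pi.hasSum.1 hsum 1

theorem volume_selfAffineSet_matB_zero_eq_zero {p q m n : ℤ} (hp : p ≠ 0) (hq : 1 < |q|)
    (hnq : n < |q|) : volume (selfAffineSet (matB p q 0) (digitSet m n)) = 0 := by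
  have hq0 : q ≠ 0 := by rintro rfl; simp at hq
  have hcard : (((Finset.Ico 0 n).image (Int.cast : ℤ → ℝ)).card : ℝ) < |(q : ℝ)| := by
    have h : (n.toNat : ℤ) < |q| := by omega
    calc _ ≤ ((Finset.Ico 0 n).card : ℝ) := by exact_mod_cast Finset.card_image_le
      _ = ((n.toNat : ℤ) : ℝ) := by rw [Int.card_Ico, sub_zero, Int.cast_natCast]
      _ < ((|q| : ℤ) : ℝ) := by exact_mod_cast h
      _ = |(q : ℝ)| := Int.cast_abs
  have hY := digitExpansions.volume_eq_zero (by exact_mod_cast hq) hcard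
  exact measure_mono_null
    (t := Function.eval 1 ⁻¹' digitExpansions q ((Finset.Ico 0 n).image Int.cast))
    (fun x hx => apply_one_mem_digitExpansions_of_mem_selfAffineSet hp hq0 hx)
    (Measure.pi_eval_preimage_null (fun _ => volume) hY)

theorem not_isTile_of_volume_eq_zero {T : Set (Fin 2 → ℝ)} (hT : volume T = 0) :
    ¬ IsTile T := by
  rintro ⟨J, hJ, hcover, -⟩
  have hJc : J.Countable := Set.countable_coe_iff.mp countable_of_Lindelof_of_discrete
  have : volume (⋃ t ∈ J, (fun x => x + t) '' T) = 0 :=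
    (measure_biUnion_null_iff hJc).2 fun t _ => by
      rw [Set.image_add_right, measure_preimage_add_right, hT]
  rw [hcover] at this
  simp at this

theorem stmt_16_general (p q m n : ℤ) (hp : 2 ≤ |p|) (hq : 2 ≤ |q|)
    (hmn : m * n = |p * q|) (hmp : |p| < m) :
    ¬ IsTile (selfAffineSet (matB p q 0) (digitSet m n)) := by
  have hnq : n < |q| := by
    by_contra! h
    nlinarith [abs_mul p q]
  exact not_isTile_of_volume_eq_zero
    (volume_selfAffineSet_matB_zero_eq_zero (by rintro rfl; simp at hp) (by omega) hnq)

theorem stmt_16 (p q m n : ℤ) (hp : 2 ≤ |p|) (hq : 2 ≤ |q|)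
    (hm : 1 ≤ m) (hn : 1 ≤ n) (hmn : m * n = |p * q|) (hmp : |p| < m) :
    ¬ IsTile (selfAffineSet (matB p q 0) (digitSet m n)) :=
  stmt_16_general p q m n hp hq hmn hmp
end

section
/- Let p, q, m, n be integers with |p| ≥ 2, |q| ≥ 2, m, n ≥ 1, mn = |pq|, and m < |p| (so n > |q|), and let a ∈ ℝ. Then the map from D × D to ℝ² sending (d₀, d₁) to d₀ + A d₁ is not injective; that is, there exist pairs (d₀, d₁) ≠ (d₀′, d₁′) with d₀, d₁, d₀′, d₁′ ∈ D and d₀ + A d₁ = d₀′ + A d₁′. In particular the digit expansion set D_{A,2} = { d₀ + A d₁ : d₀, d₁ ∈ D } has fewer than (mn)² elements. -/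
open Matrix

/-!
With all first digits `0`, `d₀ + A d₁` is `(0, j₀ + q j₁)` because `A` is lower triangular.
From `mn = |pq|` and `m < |p|` we get `n > |q|`, so `j₀ = |q|` is an admissible digit, and
`|q| + q e₀ = 0 + q e₁` for suitable `e₀, e₁ ∈ {0, 1}` is a collision. Hence the digit map on
`D × D`, a set of `(mn)²` points, is not injective and its image is smaller.
-/

lemma abs_lt_of_mul_eq_abs_mul {R : Type*} [CommRing R] [LinearOrder R] [IsStrictOrderedRing R]
    {p q m n : R} (hq : q ≠ 0) (hm : 0 < m) (hmn : m * n = |p * q|) (hmp : m < |p|) :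
    |q| < n := by
  rw [abs_mul] at hmn
  by_contra! hnq
  have hq' : 0 < |q| := abs_pos.mpr hq
  nlinarith [mul_le_mul_of_nonneg_left hnq hm.le, mul_lt_mul_of_pos_right hmp hq']

lemma Set.ncard_image_lt_of_not_injOn {α β : Type*} {f : α → β} {s : Set α} (hs : s.Finite)
    (hf : ¬ Set.InjOn f s) : (f '' s).ncard < s.ncard :=
  (Set.ncard_image_le hs).lt_of_ne (mt (Set.ncard_image_iff hs).mp hf)

lemma Int.exists_abs_add_mul_eq_mul (q : ℤ) :
    ∃ e₀ e₁ : ℤ, 0 ≤ e₀ ∧ e₀ ≤ 1 ∧ 0 ≤ e₁ ∧ e₁ ≤ 1 ∧ |q| + q * e₀ = q * e₁ := by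
  rcases le_total 0 q with hq | hq
  · exact ⟨0, 1, by simp [abs_of_nonneg hq]⟩
  · exact ⟨1, 0, by simp [abs_of_nonpos hq]⟩

lemma matB_mulVec (p q : ℤ) (a x y : ℝ) :
    matB p q a *ᵥ ![x, y] = ![p * x, a * x + q * y] := by
  rw [matB, mulVec_fin_two]
  simp

lemma vec_mem_digitSet {m n i j : ℤ} (hi₀ : 0 ≤ i) (hi : i ≤ m - 1) (hj₀ : 0 ≤ j)
    (hj : j ≤ n - 1) : ![(i : ℝ), (j : ℝ)] ∈ digitSet m n :=
  ⟨i, j, hi₀, hi, hj₀, hj, rfl⟩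

lemma digitSet_eq_image (m n : ℤ) :
    digitSet m n =
      (fun ij : ℤ × ℤ ↦ ![(ij.1 : ℝ), (ij.2 : ℝ)]) '' (Set.Icc 0 (m - 1) ×ˢ Set.Icc 0 (n - 1)) := by
  ext v
  simp only [digitSet, Set.mem_ofPred_eq, Set.mem_image, Set.mem_prod, Set.mem_Icc, Prod.exists]
  grind

lemma ncard_digitSet (m n : ℤ) : (digitSet m n).ncard = m.toNat * n.toNat := by
  have hinj : Function.Injective (fun ij : ℤ × ℤ ↦ ![(ij.1 : ℝ), (ij.2 : ℝ)]) := by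
    rintro ⟨i, j⟩ ⟨i', j'⟩ h
    simpa using h
  rw [digitSet_eq_image, Set.ncard_image_of_injective _ hinj, Set.ncard_prod,
    ← Finset.coe_Icc, ← Finset.coe_Icc, Set.ncard_coe_finset, Set.ncard_coe_finset,
    Int.card_Icc, Int.card_Icc]
  simp

lemma digitSet_finite (m n : ℤ) : (digitSet m n).Finite := by
  rw [digitSet_eq_image]
  exact ((Set.finite_Icc _ _).prod (Set.finite_Icc _ _)).image _

lemma not_injOn_digit_map {p q m n : ℤ} (a : ℝ) (hq : q ≠ 0) (hm : 1 ≤ m) (hqn : |q| < n) :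
    ¬ Set.InjOn (fun d : (Fin 2 → ℝ) × (Fin 2 → ℝ) ↦ d.1 + matB p q a *ᵥ d.2)
      (digitSet m n ×ˢ digitSet m n) := by
  obtain ⟨e₀, e₁, he₀, he₀', he₁, he₁', hcollide⟩ := Int.exists_abs_add_mul_eq_mul q
  have hcollide' : |(q : ℝ)| + q * e₀ = q * e₁ := by exact_mod_cast hcollide
  have hn : 2 ≤ n := by linarith [Int.one_le_abs hq]
  intro hinj
  have hpairs := hinj
    (x₁ := (![((0 : ℤ) : ℝ), ((|q| : ℤ) : ℝ)], ![((0 : ℤ) : ℝ), (e₀ : ℝ)]))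
    ⟨vec_mem_digitSet le_rfl (by omega) (abs_nonneg q) (by linarith),
      vec_mem_digitSet le_rfl (by omega) he₀ (by omega)⟩
    (x₂ := (![((0 : ℤ) : ℝ), ((0 : ℤ) : ℝ)], ![((0 : ℤ) : ℝ), (e₁ : ℝ)]))
    ⟨vec_mem_digitSet le_rfl (by omega) le_rfl (by omega),
      vec_mem_digitSet le_rfl (by omega) he₁ (by omega)⟩
    (by
      simp only [matB_mulVec]
      ext i
      fin_cases i <;> simp [hcollide'])
  exact hq (by simpa using congrFun (congrArg Prod.fst hpairs) 1)

theorem stmt_18_general (p q m n : ℤ) (a : ℝ) (hq : 2 ≤ |q|)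
    (hm : 1 ≤ m) (hmn : m * n = |p * q|) (hmp : m < |p|) :
    (∃ d₀ d₁ d₀' d₁' : Fin 2 → ℝ,
      d₀ ∈ digitSet m n ∧ d₁ ∈ digitSet m n ∧
      d₀' ∈ digitSet m n ∧ d₁' ∈ digitSet m n ∧
      (d₀, d₁) ≠ (d₀', d₁') ∧
      d₀ + (matB p q a).mulVec d₁ = d₀' + (matB p q a).mulVec d₁') ∧
    {x : Fin 2 → ℝ | ∃ d₀ ∈ digitSet m n, ∃ d₁ ∈ digitSet m n,
        x = d₀ + (matB p q a).mulVec d₁}.ncard < (m * n).toNat ^ 2 := by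
  have hq₀ : q ≠ 0 := by rintro rfl; simp at hq
  have hqn : |q| < n := abs_lt_of_mul_eq_abs_mul hq₀ (by omega) hmn hmp
  have hcollision := not_injOn_digit_map (p := p) a hq₀ hm hqn
  constructor
  · simp only [Set.InjOn, not_forall] at hcollision
    obtain ⟨⟨d₀, d₁⟩, ⟨hd₀, hd₁⟩, ⟨d₀', d₁'⟩, ⟨hd₀', hd₁'⟩, heq, hne⟩ := hcollision
    exact ⟨d₀, d₁, d₀', d₁', hd₀, hd₁, hd₀', hd₁', hne, heq⟩
  · have himage : {x : Fin 2 → ℝ | ∃ d₀ ∈ digitSet m n, ∃ d₁ ∈ digitSet m n,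
        x = d₀ + (matB p q a).mulVec d₁} =
        (fun d ↦ d.1 + matB p q a *ᵥ d.2) '' (digitSet m n ×ˢ digitSet m n) := by
      ext x
      simp only [Set.mem_ofPred_eq, Set.mem_image, Set.mem_prod, Prod.exists, and_assoc, eq_comm]
      grind
    have hcard : (digitSet m n ×ˢ digitSet m n).ncard = (m * n).toNat ^ 2 := by
      rw [Set.ncard_prod, ncard_digitSet, Int.toNat_mul (by omega) (by linarith [abs_nonneg q])]
      ring
    rw [himage, ← hcard]
    exact Set.ncard_image_lt_of_not_injOn ((digitSet_finite m n).prod (digitSet_finite m n))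
      hcollision

theorem stmt_18 (p q m n : ℤ) (a : ℝ) (hp : 2 ≤ |p|) (hq : 2 ≤ |q|)
    (hm : 1 ≤ m) (hn : 1 ≤ n) (hmn : m * n = |p * q|) (hmp : m < |p|) :
    (∃ d₀ d₁ d₀' d₁' : Fin 2 → ℝ,
      d₀ ∈ digitSet m n ∧ d₁ ∈ digitSet m n ∧
      d₀' ∈ digitSet m n ∧ d₁' ∈ digitSet m n ∧
      (d₀, d₁) ≠ (d₀', d₁') ∧
      d₀ + (matB p q a).mulVec d₁ = d₀' + (matB p q a).mulVec d₁') ∧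
    {x : Fin 2 → ℝ | ∃ d₀ ∈ digitSet m n, ∃ d₁ ∈ digitSet m n,
        x = d₀ + (matB p q a).mulVec d₁}.ncard < (m * n).toNat ^ 2 :=
  stmt_18_general p q m n a hq hm hmn hmp
end
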